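/- arXiv:2301.00071 — 3 statements merged into one kernel-verified Lean document; each statement's English description precedes it below -/
import Mathlib

section
/- For all integers l ≥ 0 and all α, β with Re(α) > -1/2, Re(β) > -1/2, the integral ∫_{-1}^{1} (P_l^{(α,β)}(t))^2 (1-t)^{2α}(1+t)^{2β} dt equals (2^{2α+2β+1}/(l!)^2) · B(2α+1, 2β+1) · W_l(α,β)/(2α+2β+2)_{2l}, where W_l(α,β) = Σ_{k=0}^{2l} ((-1)^{l+k}/k!) ⟨2l⟩_k ⟨α+l⟩_k ⟨β+l⟩_{2l-k} (2α+1)_{2l-k} (2β+1)_k. -/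
open MeasureTheory intervalIntegral Finset

noncomputable def ascPoch (a : ℂ) (k : ℕ) : ℂ := (ascPochhammer ℂ k).eval a

noncomputable def descPoch (a : ℂ) (k : ℕ) : ℂ := (descPochhammer ℂ k).eval a

noncomputable def betaFn (a b : ℂ) : ℂ := Complex.Gamma a * Complex.Gamma b / Complex.Gamma (a + b)

/-- Jacobi polynomial via Rodrigues' formula, as a function of a real variable. -/
noncomputable def jacobiP (l : ℕ) (α β : ℂ) (t : ℝ) : ℂ :=
  ((-1 : ℂ) ^ l / (2 ^ l * (l.factorial : ℂ))) * (1 - (t : ℂ)) ^ (-α) * (1 + (t : ℂ)) ^ (-β) *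
    iteratedDeriv l (fun s : ℝ => (1 - (s : ℂ)) ^ ((l : ℂ) + α) * (1 + (s : ℂ)) ^ ((l : ℂ) + β)) t

/-- The polynomial `W_l(α,β)`. -/
noncomputable def W (l : ℕ) (α β : ℂ) : ℂ :=
  ∑ k ∈ range (2 * l + 1),
    ((-1 : ℂ) ^ (l + k) / (k.factorial : ℂ)) * descPoch (2 * l) k * descPoch (α + l) k *
      descPoch (β + l) (2 * l - k) * ascPoch (2 * α + 1) (2 * l - k) * ascPoch (2 * β + 1) k

/-!
Rodrigues' formula writes `P_l^{(α,β)}` as `(1-t)^{-α} (1+t)^{-β}` times the `l`-th derivative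
of `w(t) = (1-t)^{l+α} (1+t)^{l+β}`, so the integral is a constant times `∫ (w⁽ˡ⁾)²`.
Integrating by parts `l` times gives `(-1)^l ∫ w w⁽²ˡ⁾`; the boundary terms vanish exactly because
`Re α, Re β > -1/2`. By the Leibniz rule `w w⁽²ˡ⁾` is a finite combination of functions
`(1-t)^p (1+t)^q`, which integrate to `2^{p+q+1} B(p+1, q+1)`, and `Γ(z+n) = (z)ₙ Γ(z)` expresses
these through `B(2α+1, 2β+1)`.
-/

open Filter Topology Complex

noncomputable def jacobiWeight (P Q : ℂ) (t : ℝ) : ℂ := (1 - (t : ℂ)) ^ P * (1 + (t : ℂ)) ^ Q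

section JacobiWeight

variable {P Q P' Q' : ℂ} {t : ℝ}

lemma one_sub_ofReal_mem_slitPlane (ht : t < 1) : 1 - (t : ℂ) ∈ slitPlane := by
  rw [← ofReal_one, ← ofReal_sub, ofReal_mem_slitPlane]; linarith

lemma one_add_ofReal_mem_slitPlane (ht : -1 < t) : 1 + (t : ℂ) ∈ slitPlane := by
  rw [← ofReal_one, ← ofReal_add, ofReal_mem_slitPlane]; linarith

lemma hasDerivAt_jacobiWeight (ht : t ∈ Set.Ioo (-1) 1) :
    HasDerivAt (jacobiWeight P Q)
      (-P * jacobiWeight (P - 1) Q t + Q * jacobiWeight P (Q - 1) t) t := by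
  have hsub : HasDerivAt (fun s : ℝ => (1 - (s : ℂ)) ^ P) (-P * (1 - (t : ℂ)) ^ (P - 1)) t := by
    simpa using (((hasDerivAt_id (t : ℂ)).const_sub 1).cpow_const
      (one_sub_ofReal_mem_slitPlane ht.2)).comp_ofReal
  have hadd : HasDerivAt (fun s : ℝ => (1 + (s : ℂ)) ^ Q) (Q * (1 + (t : ℂ)) ^ (Q - 1)) t := by
    simpa using (((hasDerivAt_id (t : ℂ)).const_add 1).cpow_const
      (one_add_ofReal_mem_slitPlane ht.1)).comp_ofReal
  exact (hsub.mul hadd).congr_deriv (by unfold jacobiWeight; ring)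

lemma jacobiWeight_mul_jacobiWeight (ht : t ∈ Set.Ioo (-1) 1) :
    jacobiWeight P Q t * jacobiWeight P' Q' t = jacobiWeight (P + P') (Q + Q') t := by
  simp only [jacobiWeight, cpow_add _ _ (slitPlane_ne_zero (one_sub_ofReal_mem_slitPlane ht.2)),
    cpow_add _ _ (slitPlane_ne_zero (one_add_ofReal_mem_slitPlane ht.1))]
  ring

lemma continuousAt_jacobiWeight (hP : 0 < P.re ∨ t ≠ 1) (hQ : 0 < Q.re ∨ t ≠ -1) :
    ContinuousAt (jacobiWeight P Q) t := by
  have hsub : ContinuousAt (fun s : ℝ => ((1 - s : ℝ) : ℂ) ^ P) t :=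
    (continuousAt_ofReal_cpow_const _ P (hP.imp_right fun h h' => h (by linarith))).comp
      (continuous_const.sub continuous_id).continuousAt
  have hadd : ContinuousAt (fun s : ℝ => ((1 + s : ℝ) : ℂ) ^ Q) t :=
    (continuousAt_ofReal_cpow_const _ Q (hQ.imp_right fun h h' => h (by linarith))).comp
      (continuous_const.add continuous_id).continuousAt
  unfold jacobiWeight
  simpa only [ofReal_sub, ofReal_add, ofReal_one] using hsub.fun_mul hadd

lemma tendsto_jacobiWeight_nhdsLT_one (hP : 0 < P.re) :
    Tendsto (jacobiWeight P Q) (𝓝[<] 1) (𝓝 0) := by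
  have hP0 : P ≠ 0 := fun h => by simp [h] at hP
  have hcont := continuousAt_jacobiWeight (Q := Q) (t := 1) (Or.inl hP) (Or.inr (by norm_num))
  simpa [jacobiWeight, zero_cpow hP0] using hcont.tendsto.mono_left nhdsWithin_le_nhds

lemma tendsto_jacobiWeight_nhdsGT_neg_one (hQ : 0 < Q.re) :
    Tendsto (jacobiWeight P Q) (𝓝[>] (-1)) (𝓝 0) := by
  have hQ0 : Q ≠ 0 := fun h => by simp [h] at hQ
  have hcont := continuousAt_jacobiWeight (P := P) (t := -1) (Or.inr (by norm_num)) (Or.inl hQ)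
  simpa [jacobiWeight, zero_cpow hQ0] using hcont.tendsto.mono_left nhdsWithin_le_nhds

end JacobiWeight

section BetaIntegral

variable {P Q : ℂ}

lemma jacobiWeight_two_mul_sub_one {x : ℝ} (hx : x ∈ Set.Icc 0 1) :
    jacobiWeight P Q (2 * x - 1) = 2 ^ (P + Q) * ((x : ℂ) ^ Q * (1 - (x : ℂ)) ^ P) := by
  have h1 : 1 - ((2 * x - 1 : ℝ) : ℂ) = ((2 : ℝ) : ℂ) * ((1 - x : ℝ) : ℂ) := by push_cast; ring
  have h2 : 1 + ((2 * x - 1 : ℝ) : ℂ) = ((2 : ℝ) : ℂ) * (x : ℂ) := by push_cast; ring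
  rw [jacobiWeight, h1, h2, mul_cpow_ofReal_nonneg zero_le_two (by linarith [hx.2]),
    mul_cpow_ofReal_nonneg zero_le_two hx.1, cpow_add _ _ two_ne_zero]
  push_cast
  ring

lemma intervalIntegrable_jacobiWeight (hP : -1 < P.re) (hQ : -1 < Q.re) :
    IntervalIntegrable (jacobiWeight P Q) volume (-1) 1 := by
  have hbeta := (betaIntegral_convergent (u := Q + 1) (v := P + 1) (by simp; linarith)
    (by simp; linarith)).const_mul (2 ^ (P + Q))
  simp only [add_sub_cancel_right] at hbeta
  have hscaled : IntervalIntegrable (fun x => jacobiWeight P Q (2 * x - 1)) volume 0 1 :=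
    hbeta.congr_uIoo fun x hx => by
      rw [Set.uIoo_of_le zero_le_one] at hx
      exact (jacobiWeight_two_mul_sub_one (Set.Ioo_subset_Icc_self hx)).symm
  have hshift := (IntervalIntegrable.comp_mul_left_iff (f := fun y => jacobiWeight P Q (y - 1))
    (a := 0) (b := 2) two_ne_zero).1 (by simpa using hscaled)
  exact (IntervalIntegrable.comp_sub_right_iff (f := jacobiWeight P Q) (a := -1) (b := 1)
    (c := 1)).1 (by norm_num; exact hshift)

lemma betaFn_comm (u v : ℂ) : betaFn u v = betaFn v u := by
  rw [betaFn, betaFn, mul_comm, add_comm]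

lemma betaFn_eq_betaIntegral {u v : ℂ} (hu : 0 < u.re) (hv : 0 < v.re) :
    betaFn u v = betaIntegral u v := by
  rw [betaFn, Gamma_mul_Gamma_eq_betaIntegral hu hv,
    mul_div_cancel_left₀ _ (Gamma_ne_zero_of_re_pos (by simp; linarith))]

lemma integral_jacobiWeight (hP : -1 < P.re) (hQ : -1 < Q.re) :
    ∫ t in (-1 : ℝ)..1, jacobiWeight P Q t = 2 ^ (P + Q + 1) * betaFn (P + 1) (Q + 1) := by
  have hsub := intervalIntegral.integral_comp_mul_sub (a := 0) (b := 1) (jacobiWeight P Q)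
    two_ne_zero 1
  rw [intervalIntegral.integral_congr fun x hx => jacobiWeight_two_mul_sub_one
      (by rwa [Set.uIcc_of_le zero_le_one] at hx),
    intervalIntegral.integral_const_mul] at hsub
  have hbeta : ∫ x in (0 : ℝ)..1, (x : ℂ) ^ Q * (1 - (x : ℂ)) ^ P = betaFn (P + 1) (Q + 1) := by
    rw [betaFn_comm, betaFn_eq_betaIntegral (by simp; linarith) (by simp; linarith),
      betaIntegral]
    simp only [add_sub_cancel_right]
  norm_num [hbeta] at hsub
  rw [cpow_add _ _ two_ne_zero, cpow_one]
  linear_combination -2 * hsub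

lemma ascPoch_eq_Gamma_div {z : ℂ} (hz : 0 < z.re) (n : ℕ) :
    ascPoch z n = Gamma (z + n) / Gamma z :=
  (Gamma_add_nat_div_Gamma_eq z fun k hk => by
    have : z.re = -k := by simp [hk]
    linarith [(Nat.cast_nonneg k : (0 : ℝ) ≤ k)]).symm

lemma betaFn_add_nat {x y : ℂ} (hx : 0 < x.re) (hy : 0 < y.re) (a b : ℕ) :
    betaFn (x + a) (y + b) = betaFn x y * ascPoch x a * ascPoch y b / ascPoch (x + y) (a + b) := by
  have hxy : 0 < (x + y).re := by simp; linarith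
  have hxyab : 0 < (x + y + (a + b : ℕ)).re := by simp; positivity
  rw [betaFn, betaFn, ascPoch_eq_Gamma_div hx, ascPoch_eq_Gamma_div hy, ascPoch_eq_Gamma_div hxy]
  have := Gamma_ne_zero_of_re_pos hx
  have := Gamma_ne_zero_of_re_pos hy
  have := Gamma_ne_zero_of_re_pos hxy
  have := Gamma_ne_zero_of_re_pos hxyab
  rw [show x + a + (y + b) = x + y + (a + b : ℕ) by push_cast; ring]
  field_simp

end BetaIntegral

section WeightDerivative

variable {P Q P' Q' : ℂ} {t : ℝ}

noncomputable def leibnizCoeff (P Q : ℂ) (i j : ℕ) : ℂ := (-1) ^ i * descPoch P i * descPoch Q j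

noncomputable def leibnizTerm (P Q : ℂ) (i j : ℕ) (t : ℝ) : ℂ :=
  leibnizCoeff P Q i j * jacobiWeight (P - i) (Q - j) t

-- The Leibniz expansion of `iteratedDeriv m (jacobiWeight P Q)` (`iteratedDeriv_jacobiWeight`),
-- which unlike the iterated derivative is given by one formula on all of `ℝ`.
noncomputable def jacobiWeightDeriv (P Q : ℂ) (m : ℕ) (t : ℝ) : ℂ :=
  ∑ i ∈ range (m + 1), (m.choose i : ℂ) * leibnizTerm P Q i (m - i) t

lemma descPoch_succ (a : ℂ) (k : ℕ) : descPoch a (k + 1) = descPoch a k * (a - k) := by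
  simp [descPoch, descPochhammer_succ_right]

lemma hasDerivAt_leibnizTerm (i j : ℕ) (ht : t ∈ Set.Ioo (-1) 1) :
    HasDerivAt (leibnizTerm P Q i j)
      (leibnizTerm P Q (i + 1) j t + leibnizTerm P Q i (j + 1) t) t := by
  refine ((hasDerivAt_jacobiWeight ht).const_mul (leibnizCoeff P Q i j)).congr_deriv ?_
  simp only [leibnizTerm, leibnizCoeff, descPoch_succ, pow_succ, Nat.cast_succ, sub_add_eq_sub_sub]
  ring

lemma hasDerivAt_jacobiWeightDeriv (m : ℕ) (ht : t ∈ Set.Ioo (-1) 1) :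
    HasDerivAt (jacobiWeightDeriv P Q m) (jacobiWeightDeriv P Q (m + 1) t) t := by
  rw [jacobiWeightDeriv, sum_choose_succ_mul (fun i j => leibnizTerm P Q i j t), ← sum_add_distrib]
  refine (HasDerivAt.fun_sum fun i _ =>
    (hasDerivAt_leibnizTerm i (m - i) ht).const_mul (m.choose i : ℂ)).congr_deriv ?_
  refine sum_congr rfl fun i hi => ?_
  rw [show m + 1 - i = m - i + 1 by grind]
  ring

lemma jacobiWeightDeriv_zero : jacobiWeightDeriv P Q 0 = jacobiWeight P Q := by
  ext t
  simp [jacobiWeightDeriv, leibnizTerm, leibnizCoeff, descPoch]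

lemma iteratedDeriv_jacobiWeight (m : ℕ) (ht : t ∈ Set.Ioo (-1) 1) :
    iteratedDeriv m (jacobiWeight P Q) t = jacobiWeightDeriv P Q m t := by
  induction m generalizing t with
  | zero => simp [jacobiWeightDeriv_zero]
  | succ m ih =>
    rw [iteratedDeriv_succ,
      (eventuallyEq_of_mem (isOpen_Ioo.mem_nhds ht) fun s hs => ih hs).deriv_eq]
    exact (hasDerivAt_jacobiWeightDeriv m ht).deriv

lemma jacobiWeightDeriv_mul_jacobiWeightDeriv (m n : ℕ) (t : ℝ) :
    jacobiWeightDeriv P Q m t * jacobiWeightDeriv P Q n t =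
      ∑ i ∈ range (m + 1), ∑ k ∈ range (n + 1),
        m.choose i * leibnizCoeff P Q i (m - i) * (n.choose k * leibnizCoeff P Q k (n - k)) *
          (jacobiWeight (P - i) (Q - (m - i : ℕ)) t *
            jacobiWeight (P - k) (Q - (n - k : ℕ)) t) := by
  rw [jacobiWeightDeriv, jacobiWeightDeriv, sum_mul_sum]
  refine sum_congr rfl fun i _ => sum_congr rfl fun k _ => ?_
  simp only [leibnizTerm]
  ring

lemma intervalIntegrable_jacobiWeight_mul (hP : -1 < (P + P').re) (hQ : -1 < (Q + Q').re) :
    IntervalIntegrable (fun t => jacobiWeight P Q t * jacobiWeight P' Q' t) volume (-1) 1 :=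
  (intervalIntegrable_jacobiWeight hP hQ).congr_uIoo fun t ht => by
    rw [Set.uIoo_of_le (by norm_num)] at ht
    exact (jacobiWeight_mul_jacobiWeight ht).symm

lemma tendsto_jacobiWeight_mul_nhdsLT_one (hP : 0 < (P + P').re) :
    Tendsto (fun t => jacobiWeight P Q t * jacobiWeight P' Q' t) (𝓝[<] 1) (𝓝 0) :=
  (tendsto_jacobiWeight_nhdsLT_one (Q := Q + Q') hP).congr' <|
    eventually_of_mem (Ioo_mem_nhdsLT (by norm_num : (-1 : ℝ) < 1)) fun _ ht =>
      (jacobiWeight_mul_jacobiWeight ht).symm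

lemma tendsto_jacobiWeight_mul_nhdsGT_neg_one (hQ : 0 < (Q + Q').re) :
    Tendsto (fun t => jacobiWeight P Q t * jacobiWeight P' Q' t) (𝓝[>] (-1)) (𝓝 0) :=
  (tendsto_jacobiWeight_nhdsGT_neg_one (P := P + P') hQ).congr' <|
    eventually_of_mem (Ioo_mem_nhdsGT (by norm_num : (-1 : ℝ) < 1)) fun _ ht =>
      (jacobiWeight_mul_jacobiWeight ht).symm

lemma re_sub_natCast_add_sub_natCast {z : ℂ} {i k m n : ℕ} (hi : i ≤ m) (hk : k ≤ n) :
    2 * z.re - (m + n) ≤ (z - i + (z - k)).re := by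
  have : (i : ℝ) + k ≤ m + n := by exact_mod_cast add_le_add hi hk
  simp only [add_re, sub_re, natCast_re]
  linarith

lemma intervalIntegrable_jacobiWeightDeriv_mul {m n : ℕ} (hP : (m + n : ℝ) < 2 * P.re + 1)
    (hQ : (m + n : ℝ) < 2 * Q.re + 1) :
    IntervalIntegrable (fun t => jacobiWeightDeriv P Q m t * jacobiWeightDeriv P Q n t)
      volume (-1) 1 := by
  simp_rw [jacobiWeightDeriv_mul_jacobiWeightDeriv, intervalIntegrable_iff]
  refine integrable_finsetSum _ fun i hi => integrable_finsetSum _ fun k hk => ?_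
  refine intervalIntegrable_iff.1 ?_
  have hP' := re_sub_natCast_add_sub_natCast (z := P) (mem_range_succ_iff.1 hi)
    (mem_range_succ_iff.1 hk)
  have hQ' := re_sub_natCast_add_sub_natCast (z := Q) (Nat.sub_le m i) (Nat.sub_le n k)
  exact (intervalIntegrable_jacobiWeight_mul (by linarith) (by linarith)).const_mul _

lemma tendsto_jacobiWeightDeriv_mul_nhdsLT_one {m n : ℕ} (hP : (m + n : ℝ) < 2 * P.re) :
    Tendsto (fun t => jacobiWeightDeriv P Q m t * jacobiWeightDeriv P Q n t) (𝓝[<] 1) (𝓝 0) := by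
  simp_rw [jacobiWeightDeriv_mul_jacobiWeightDeriv]
  rw [← sum_const_zero (s := range (m + 1))]
  refine tendsto_finsetSum _ fun i hi => ?_
  rw [← sum_const_zero (s := range (n + 1))]
  refine tendsto_finsetSum _ fun k hk => ?_
  have hP' := re_sub_natCast_add_sub_natCast (z := P) (mem_range_succ_iff.1 hi)
    (mem_range_succ_iff.1 hk)
  simpa using (tendsto_jacobiWeight_mul_nhdsLT_one (by linarith)).const_mul _

lemma tendsto_jacobiWeightDeriv_mul_nhdsGT_neg_one {m n : ℕ} (hQ : (m + n : ℝ) < 2 * Q.re) :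
    Tendsto (fun t => jacobiWeightDeriv P Q m t * jacobiWeightDeriv P Q n t)
      (𝓝[>] (-1)) (𝓝 0) := by
  simp_rw [jacobiWeightDeriv_mul_jacobiWeightDeriv]
  rw [← sum_const_zero (s := range (m + 1))]
  refine tendsto_finsetSum _ fun i hi => ?_
  rw [← sum_const_zero (s := range (n + 1))]
  refine tendsto_finsetSum _ fun k hk => ?_
  have hQ' := re_sub_natCast_add_sub_natCast (z := Q) (Nat.sub_le m i) (Nat.sub_le n k)
  simpa using (tendsto_jacobiWeight_mul_nhdsGT_neg_one (by linarith)).const_mul _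

end WeightDerivative

section IntegrationByParts

variable {P Q : ℂ}

lemma integral_jacobiWeightDeriv_succ_mul {m n : ℕ} (hP : (m + n : ℝ) < 2 * P.re)
    (hQ : (m + n : ℝ) < 2 * Q.re) :
    ∫ t in (-1 : ℝ)..1, jacobiWeightDeriv P Q (m + 1) t * jacobiWeightDeriv P Q n t =
      -∫ t in (-1 : ℝ)..1, jacobiWeightDeriv P Q m t * jacobiWeightDeriv P Q (n + 1) t := by
  have hint₁ := intervalIntegrable_jacobiWeightDeriv_mul (P := P) (Q := Q) (m := m + 1) (n := n)
    (by push_cast; linarith) (by push_cast; linarith)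
  have hint₂ := intervalIntegrable_jacobiWeightDeriv_mul (P := P) (Q := Q) (m := m) (n := n + 1)
    (by push_cast; linarith) (by push_cast; linarith)
  have hFTC := intervalIntegral.integral_eq_sub_of_hasDerivAt_of_tendsto (by norm_num)
    (fun t ht => (hasDerivAt_jacobiWeightDeriv m ht).mul (hasDerivAt_jacobiWeightDeriv n ht))
    (hint₁.add hint₂) (tendsto_jacobiWeightDeriv_mul_nhdsGT_neg_one hQ)
    (tendsto_jacobiWeightDeriv_mul_nhdsLT_one hP)
  rw [intervalIntegral.integral_add hint₁ hint₂, sub_zero] at hFTC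
  linear_combination hFTC

lemma integral_jacobiWeightDeriv_add_mul {m n : ℕ} (j : ℕ) (hP : (m + n + j : ℝ) < 2 * P.re + 1)
    (hQ : (m + n + j : ℝ) < 2 * Q.re + 1) :
    ∫ t in (-1 : ℝ)..1, jacobiWeightDeriv P Q (m + j) t * jacobiWeightDeriv P Q n t =
      (-1) ^ j *
        ∫ t in (-1 : ℝ)..1, jacobiWeightDeriv P Q m t * jacobiWeightDeriv P Q (n + j) t := by
  induction j generalizing n with
  | zero => simp
  | succ j ih =>
    push_cast at hP hQ
    rw [← add_assoc, integral_jacobiWeightDeriv_succ_mul (by push_cast; linarith)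
      (by push_cast; linarith), ih (n := n + 1) (by push_cast; linarith) (by push_cast; linarith),
      add_right_comm n 1 j, add_assoc n j 1]
    ring

end IntegrationByParts

section Evaluation

variable {P Q : ℂ}

lemma integral_jacobiWeight_mul_jacobiWeightDeriv {n : ℕ} (hP : (n : ℝ) < 2 * P.re + 1)
    (hQ : (n : ℝ) < 2 * Q.re + 1) :
    ∫ t in (-1 : ℝ)..1, jacobiWeight P Q t * jacobiWeightDeriv P Q n t =
      ∑ i ∈ range (n + 1), n.choose i * leibnizCoeff P Q i (n - i) *
        (2 ^ (P + (P - i) + (Q + (Q - (n - i : ℕ))) + 1) *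
          betaFn (P + (P - i) + 1) (Q + (Q - (n - i : ℕ)) + 1)) := by
  have hterm : ∀ i ∈ range (n + 1), Set.EqOn
      (fun t => jacobiWeight P Q t * (n.choose i * leibnizTerm P Q i (n - i) t))
      (fun t => n.choose i * leibnizCoeff P Q i (n - i) *
        jacobiWeight (P + (P - i)) (Q + (Q - (n - i : ℕ))) t) (Set.Ioo (-1) 1) :=
    fun i _ t ht => by
      simp only [leibnizTerm, ← jacobiWeight_mul_jacobiWeight ht]
      ring
  have hexp : ∀ i ∈ range (n + 1), -1 < (P + (P - i)).re ∧ -1 < (Q + (Q - (n - i : ℕ))).re :=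
    fun i hi => by
      have hP' := re_sub_natCast_add_sub_natCast (z := P) (Nat.zero_le 0) (mem_range_succ_iff.1 hi)
      have hQ' := re_sub_natCast_add_sub_natCast (z := Q) (Nat.zero_le 0) (Nat.sub_le n i)
      simp only [CharP.cast_eq_zero, sub_zero, zero_add] at hP' hQ'
      exact ⟨by linarith, by linarith⟩
  simp_rw [jacobiWeightDeriv, mul_sum]
  rw [intervalIntegral.integral_finsetSum fun i hi =>
    ((intervalIntegrable_jacobiWeight (hexp i hi).1 (hexp i hi).2).const_mul _).congr_uIoo
      fun t ht => (hterm i hi (by rwa [Set.uIoo_of_le (by norm_num)] at ht)).symm]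
  refine sum_congr rfl fun i hi => ?_
  rw [intervalIntegral.integral_congr_Ioo_of_le (by norm_num) (hterm i hi),
    intervalIntegral.integral_const_mul, integral_jacobiWeight (hexp i hi).1 (hexp i hi).2]

end Evaluation

section Jacobi

variable {l : ℕ} {α β : ℂ} {t : ℝ}

lemma W_eq_sum_choose :
    W l α β = (-1) ^ l * ∑ i ∈ range (2 * l + 1), (2 * l).choose i *
      leibnizCoeff (l + α) (l + β) i (2 * l - i) *
        (ascPoch (2 * α + 1) (2 * l - i) * ascPoch (2 * β + 1) i) := by
  rw [W, mul_sum]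
  refine sum_congr rfl fun i _ => ?_
  have hdesc : descPoch (2 * l) i = i.factorial * (2 * l).choose i := by
    rw [show (2 * l : ℂ) = ((2 * l : ℕ) : ℂ) by push_cast; ring, descPoch,
      descPochhammer_eval_eq_descFactorial, Nat.descFactorial_eq_factorial_mul_choose]
    push_cast
    ring
  have hfac : (i.factorial : ℂ) ≠ 0 := Nat.cast_ne_zero.2 i.factorial_ne_zero
  rw [hdesc, leibnizCoeff, add_comm α, add_comm β, pow_add]
  field_simp

lemma two_cpow_mul_betaFn_of_le {i : ℕ} (hi : i ≤ 2 * l) (hα : 0 < (2 * α + 1).re)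
    (hβ : 0 < (2 * β + 1).re) :
    2 ^ (l + α + (l + α - i) + (l + β + (l + β - (2 * l - i : ℕ))) + 1) *
        betaFn (l + α + (l + α - i) + 1) (l + β + (l + β - (2 * l - i : ℕ)) + 1) =
      4 ^ l * 2 ^ (2 * α + 2 * β + 1) * betaFn (2 * α + 1) (2 * β + 1) *
        (ascPoch (2 * α + 1) (2 * l - i) * ascPoch (2 * β + 1) i) /
          ascPoch (2 * α + 2 * β + 2) (2 * l) := by
  have hcast : ((2 * l - i : ℕ) : ℂ) = 2 * l - i := by push_cast [Nat.cast_sub hi]; ring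
  have hexp : (l + α + (l + α - i) + (l + β + (l + β - (2 * l - i : ℕ))) + 1 : ℂ) =
      2 * α + 2 * β + 1 + ((2 * l : ℕ) : ℂ) := by
    rw [hcast]; push_cast; ring
  have hfst : (l + α + (l + α - i) + 1 : ℂ) = 2 * α + 1 + ((2 * l - i : ℕ) : ℂ) := by
    rw [hcast]; ring
  have hsnd : (l + β + (l + β - (2 * l - i : ℕ)) + 1 : ℂ) = 2 * β + 1 + (i : ℂ) := by
    rw [hcast]; ring
  rw [hexp, hfst, hsnd, betaFn_add_nat hα hβ, Nat.sub_add_cancel hi,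
    cpow_add _ _ two_ne_zero, cpow_natCast, pow_mul,
    show 2 * α + 1 + (2 * β + 1) = 2 * α + 2 * β + 2 by ring]
  norm_num
  ring

lemma integral_jacobiWeightDeriv_mul_self (hα : -1 / 2 < α.re) (hβ : -1 / 2 < β.re) :
    ∫ t in (-1 : ℝ)..1,
        jacobiWeightDeriv (l + α) (l + β) l t * jacobiWeightDeriv (l + α) (l + β) l t =
      4 ^ l * 2 ^ (2 * α + 2 * β + 1) * betaFn (2 * α + 1) (2 * β + 1) *
        (W l α β / ascPoch (2 * α + 2 * β + 2) (2 * l)) := by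
  have hP : ((0 : ℕ) + l + l : ℝ) < 2 * ((l : ℂ) + α).re + 1 := by simp; linarith
  have hQ : ((0 : ℕ) + l + l : ℝ) < 2 * ((l : ℂ) + β).re + 1 := by simp; linarith
  have hparts := integral_jacobiWeightDeriv_add_mul l hP hQ
  rw [zero_add, jacobiWeightDeriv_zero, ← two_mul] at hparts
  rw [hparts, integral_jacobiWeight_mul_jacobiWeightDeriv (by push_cast; simp; linarith)
    (by push_cast; simp; linarith), W_eq_sum_choose, mul_sum, mul_sum, sum_div, mul_sum]
  refine sum_congr rfl fun i hi => ?_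
  rw [two_cpow_mul_betaFn_of_le (mem_range_succ_iff.1 hi) (by simp; linarith) (by simp; linarith)]
  ring

lemma jacobiP_eq_mul_jacobiWeightDeriv (ht : t ∈ Set.Ioo (-1) 1) :
    jacobiP l α β t = (-1) ^ l / (2 ^ l * l.factorial) * jacobiWeight (-α) (-β) t *
      jacobiWeightDeriv (l + α) (l + β) l t := by
  rw [← iteratedDeriv_jacobiWeight l ht]
  unfold jacobiP jacobiWeight
  ring

lemma jacobiP_sq_mul_weight (ht : t ∈ Set.Ioo (-1) 1) :
    jacobiP l α β t ^ 2 * (1 - (t : ℂ)) ^ (2 * α) * (1 + (t : ℂ)) ^ (2 * β) =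
      ((-1) ^ l / (2 ^ l * l.factorial)) ^ 2 *
        (jacobiWeightDeriv (l + α) (l + β) l t * jacobiWeightDeriv (l + α) (l + β) l t) := by
  have hunit : jacobiWeight (-α) (-β) t * jacobiWeight (-α) (-β) t *
      jacobiWeight (2 * α) (2 * β) t = 1 := by
    rw [jacobiWeight_mul_jacobiWeight ht, jacobiWeight_mul_jacobiWeight ht]
    simp [jacobiWeight, show -α + -α + 2 * α = 0 by ring, show -β + -β + 2 * β = 0 by ring]
  rw [jacobiP_eq_mul_jacobiWeightDeriv ht]
  unfold jacobiWeight at hunit ⊢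
  linear_combination
    ((-1) ^ l / (2 ^ l * l.factorial) * jacobiWeightDeriv (l + α) (l + β) l t) ^ 2 * hunit

end Jacobi

theorem stmt1 (l : ℕ) (α β : ℂ) (hα : α.re > -1/2) (hβ : β.re > -1/2) :
    ∫ t in (-1 : ℝ)..1, (jacobiP l α β t) ^ 2 * (1 - (t : ℂ)) ^ (2 * α) * (1 + (t : ℂ)) ^ (2 * β)
      = (2 : ℂ) ^ (2 * α + 2 * β + 1) / ((l.factorial : ℂ)) ^ 2 *
        betaFn (2 * α + 1) (2 * β + 1) * (W l α β / ascPoch (2 * α + 2 * β + 2) (2 * l)) := by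
  have hconst : ((-1 : ℂ) ^ l / (2 ^ l * l.factorial)) ^ 2 * 4 ^ l = 1 / (l.factorial : ℂ) ^ 2 := by
    have hsign : ((-1 : ℂ) ^ l) ^ 2 = 1 := by rw [← pow_mul, pow_mul', neg_one_sq, one_pow]
    have hfour : ((2 : ℂ) ^ l) ^ 2 = 4 ^ l := by rw [← pow_mul, pow_mul']; norm_num
    have hfac : (l.factorial : ℂ) ≠ 0 := Nat.cast_ne_zero.2 l.factorial_ne_zero
    rw [div_pow, mul_pow, hsign, hfour]
    field_simp
  rw [intervalIntegral.integral_congr_Ioo_of_le (by norm_num) fun t ht => jacobiP_sq_mul_weight ht,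
    intervalIntegral.integral_const_mul, integral_jacobiWeightDeriv_mul_self hα hβ]
  linear_combination (2 ^ (2 * α + 2 * β + 1) * betaFn (2 * α + 1) (2 * β + 1) *
    (W l α β / ascPoch (2 * α + 2 * β + 2) (2 * l))) * hconst
end

section
/- For all integers l ≥ 1 and real d ≥ d_0 > 0, the integral ∫_{cos r}^{1} P_l^{(d/2-1, d_0/2-1)}(t) (1-t)^{d/2-1}(1+t)^{d_0/2-1} dt equals 2^{d/2+d_0/2-1} l^{-1} (sin(r/2))^d (cos(r/2))^{d_0} P_{l-1}^{(d/2, d_0/2)}(cos r), for every r ∈ [0, π]. -/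
/-!
By Rodrigues' formula the integrand is `c_l` times the `l`-th derivative of
`F(t) = (1 - t)^(l+α) (1 + t)^(l+β)`, with `c_l = (-1)^l / (2^l l!)`. Integrating from `x` to `1`
leaves `-c_l F^(l-1)(x)`, the boundary term at `1` vanishing. Since `(l-1) + (α+1) = l + α`, Rodrigues'
formula for `P_{l-1}^{(α+1,β+1)}` reads `F^(l-1)(x) = (1-x)^(α+1) (1+x)^(β+1) P_{l-1}^{(α+1,β+1)}(x) / c_{l-1}`,
and `c_l / c_{l-1} = -1/(2l)`. With `x = cos r`, `1 - x = 2 sin²(r/2)` and `1 + x = 2 cos²(r/2)`.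

To control the endpoints, the derivatives of `F` on `(-1, 1)` are written as
`(1 - t)^a (1 + t)^b p(t)` with `p` a polynomial: this form is continuous on `[-1, 1]` when
`re a, re b > 0` and integrable when `re a, re b > -1`.
-/

open MeasureTheory intervalIntegral

namespace JacobiRodrigues

open Polynomial Complex Set

noncomputable def weightedPoly (a b : ℂ) (p : ℂ[X]) (t : ℝ) : ℂ :=
  (1 - (t : ℂ)) ^ a * (1 + (t : ℂ)) ^ b * p.eval (t : ℂ)

noncomputable def derivStep (a b : ℂ) (p : ℂ[X]) : ℂ[X] :=
  -C a * (1 + X) * p + C b * (1 - X) * p + (1 - X) * (1 + X) * derivative p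

noncomputable def iterDerivPoly (a b : ℂ) (p : ℂ[X]) : ℕ → ℂ[X]
  | 0 => p
  | k + 1 => derivStep (a - k) (b - k) (iterDerivPoly a b p k)

noncomputable def rodriguesConst (n : ℕ) : ℂ := (-1) ^ n / (2 ^ n * n.factorial)

lemma rodriguesConst_succ (n : ℕ) :
    rodriguesConst (n + 1) = -(2 * (n + 1 : ℂ))⁻¹ * rodriguesConst n := by
  simp only [rodriguesConst, pow_succ, Nat.factorial_succ]
  push_cast
  field_simp

lemma one_sub_ofReal_mem_slitPlane {t : ℝ} (ht : t < 1) : 1 - (t : ℂ) ∈ slitPlane := by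
  rw [← ofReal_one, ← ofReal_sub, ofReal_mem_slitPlane]
  linarith

lemma one_add_ofReal_mem_slitPlane {t : ℝ} (ht : -1 < t) : 1 + (t : ℂ) ∈ slitPlane := by
  rw [← ofReal_one, ← ofReal_add, ofReal_mem_slitPlane]
  linarith

lemma cpow_eq_cpow_sub_one_mul {z : ℂ} (hz : z ≠ 0) (a : ℂ) : z ^ a = z ^ (a - 1) * z := by
  rw [cpow_sub _ _ hz, cpow_one, div_mul_cancel₀ _ hz]

lemma hasDerivAt_weightedPoly (a b : ℂ) (p : ℂ[X]) {t : ℝ} (ht : t ∈ Ioo (-1 : ℝ) 1) :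
    HasDerivAt (weightedPoly a b p) (weightedPoly (a - 1) (b - 1) (derivStep a b p) t) t := by
  have hm := one_sub_ofReal_mem_slitPlane ht.2
  have hp := one_add_ofReal_mem_slitPlane ht.1
  have H1 : HasDerivAt (fun s : ℝ => (1 - (s : ℂ)) ^ a) (a * (1 - (t : ℂ)) ^ (a - 1) * (-1)) t :=
    (((hasDerivAt_id _).const_sub 1).cpow_const hm).comp_ofReal
  have H2 : HasDerivAt (fun s : ℝ => (1 + (s : ℂ)) ^ b) (b * (1 + (t : ℂ)) ^ (b - 1) * 1) t :=
    (((hasDerivAt_id _).const_add 1).cpow_const hp).comp_ofReal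
  have H3 : HasDerivAt (fun s : ℝ => p.eval (s : ℂ)) (p.derivative.eval (t : ℂ)) t :=
    (p.hasDerivAt _).comp_ofReal
  refine ((H1.mul H2).mul H3).congr_deriv ?_
  rw [Pi.mul_apply, weightedPoly, cpow_eq_cpow_sub_one_mul (slitPlane_ne_zero hm) a,
    cpow_eq_cpow_sub_one_mul (slitPlane_ne_zero hp) b]
  simp only [derivStep, eval_add, eval_mul, eval_neg, eval_C, eval_one, eval_X, eval_sub]
  ring

lemma iteratedDeriv_weightedPoly (a b : ℂ) (p : ℂ[X]) (k : ℕ) :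
    EqOn (iteratedDeriv k (weightedPoly a b p))
      (weightedPoly (a - k) (b - k) (iterDerivPoly a b p k)) (Ioo (-1) 1) := by
  induction k with
  | zero => intro t _; simp [iterDerivPoly]
  | succ k ih =>
    intro t ht
    have hev := Filter.eventuallyEq_of_mem (isOpen_Ioo.mem_nhds ht) ih
    rw [iteratedDeriv_succ, hev.deriv_eq, (hasDerivAt_weightedPoly _ _ _ ht).deriv]
    simp only [iterDerivPoly, Nat.cast_succ, sub_sub]

lemma jacobiP_eq_eval (n : ℕ) (α β : ℂ) {t : ℝ} (ht : t ∈ Ioo (-1 : ℝ) 1) :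
    jacobiP n α β t = rodriguesConst n * (iterDerivPoly (n + α) (n + β) 1 n).eval (t : ℂ) := by
  have hF : (fun s : ℝ => (1 - (s : ℂ)) ^ ((n : ℂ) + α) * (1 + (s : ℂ)) ^ ((n : ℂ) + β))
      = weightedPoly (n + α) (n + β) 1 := by
    funext s
    simp [weightedPoly]
  have hm : (1 - (t : ℂ)) ^ α ≠ 0 :=
    cpow_ne_zero_iff.2 (Or.inl (slitPlane_ne_zero (one_sub_ofReal_mem_slitPlane ht.2)))
  have hp : (1 + (t : ℂ)) ^ β ≠ 0 :=
    cpow_ne_zero_iff.2 (Or.inl (slitPlane_ne_zero (one_add_ofReal_mem_slitPlane ht.1)))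
  rw [jacobiP, hF, iteratedDeriv_weightedPoly _ _ _ n ht, weightedPoly, add_sub_cancel_left,
    add_sub_cancel_left, cpow_neg, cpow_neg, rodriguesConst]
  field_simp

lemma jacobiP_succ_mul_weight (n : ℕ) (α β : ℂ) {t : ℝ} (ht : t ∈ Ioo (-1 : ℝ) 1) :
    jacobiP (n + 1) α β t * (1 - (t : ℂ)) ^ α * (1 + (t : ℂ)) ^ β
      = rodriguesConst (n + 1) * weightedPoly α β
          (derivStep (α + 1) (β + 1) (iterDerivPoly (n + (α + 1)) (n + (β + 1)) 1 n)) t := by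
  have hα : ((n + 1 : ℕ) : ℂ) + α = n + (α + 1) := by push_cast; ring
  have hβ : ((n + 1 : ℕ) : ℂ) + β = n + (β + 1) := by push_cast; ring
  rw [jacobiP_eq_eval (n + 1) α β ht, hα, hβ, iterDerivPoly, add_sub_cancel_left,
    add_sub_cancel_left, weightedPoly]
  ring

lemma continuous_weightedPoly {a b : ℂ} (ha : 0 < a.re) (hb : 0 < b.re) (p : ℂ[X]) :
    Continuous (weightedPoly a b p) := by
  have h1 := (continuous_ofReal_cpow_const ha).comp (continuous_sub_left (1 : ℝ))
  have h2 := (continuous_ofReal_cpow_const hb).comp (continuous_const_add (1 : ℝ))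
  have h3 : Continuous fun s : ℝ => p.eval (s : ℂ) := by fun_prop
  convert (h1.mul h2).mul h3 using 1
  funext s
  simp [weightedPoly]

lemma weightedPoly_eq_swap_neg (a b : ℂ) (p : ℂ[X]) (t : ℝ) :
    weightedPoly a b p t = weightedPoly b a (p.comp (-X)) (-t) := by
  simp only [weightedPoly, ofReal_neg, sub_neg_eq_add, eval_comp, eval_neg, eval_X]
  ring_nf

lemma intervalIntegrable_weightedPoly_zero_one {a : ℂ} (ha : -1 < a.re) (b : ℂ) (p : ℂ[X]) :
    IntervalIntegrable (weightedPoly a b p) volume 0 1 := by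
  have hw : IntervalIntegrable (fun t : ℝ => (1 - (t : ℂ)) ^ a) volume 0 1 := by
    simpa using ((intervalIntegrable_cpow' (a := 0) (b := 1) ha).comp_sub_left 1).symm
  have hg : ContinuousOn (fun t : ℝ => (1 + (t : ℂ)) ^ b * p.eval (t : ℂ)) (uIcc 0 1) := by
    refine ContinuousOn.mul ?_ (by fun_prop)
    refine (by fun_prop : ContinuousOn (fun t : ℝ => 1 + (t : ℂ)) _).cpow_const fun t ht => ?_
    rw [uIcc_of_le zero_le_one] at ht
    exact one_add_ofReal_mem_slitPlane (by linarith [ht.1])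
  convert hw.mul_continuousOn hg using 1
  funext t
  simp only [weightedPoly]
  ring

lemma intervalIntegrable_weightedPoly {a b : ℂ} (ha : -1 < a.re) (hb : -1 < b.re) (p : ℂ[X]) :
    IntervalIntegrable (weightedPoly a b p) volume (-1) 1 := by
  refine IntervalIntegrable.trans (b := 0) ?_ (intervalIntegrable_weightedPoly_zero_one ha b p)
  have h := (IntervalIntegrable.iff_comp_neg).1
    (intervalIntegrable_weightedPoly_zero_one hb a (p.comp (-X)))
  rw [neg_zero] at h
  convert h.symm using 1
  funext t
  exact weightedPoly_eq_swap_neg a b p t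

lemma integral_weightedPoly_derivStep {a b : ℂ} (ha : 0 < a.re) (hb : 0 < b.re) (p : ℂ[X])
    {x : ℝ} (hx : x ∈ Icc (-1 : ℝ) 1) :
    ∫ t in x..1, weightedPoly (a - 1) (b - 1) (derivStep a b p) t = -weightedPoly a b p x := by
  have hint : IntervalIntegrable (weightedPoly (a - 1) (b - 1) (derivStep a b p)) volume x 1 :=
    (intervalIntegrable_weightedPoly (by simpa using ha) (by simpa using hb) _).mono_set <| by
      rw [uIcc_of_le hx.2, uIcc_of_le (by norm_num)]
      exact Icc_subset_Icc hx.1 le_rfl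
  have ha0 : a ≠ 0 := fun h => by simp [h] at ha
  rw [integral_eq_sub_of_hasDerivAt_of_le hx.2 (continuous_weightedPoly ha hb p).continuousOn
    (fun t ht => hasDerivAt_weightedPoly a b p ⟨hx.1.trans_lt ht.1, ht.2⟩) hint]
  simp [weightedPoly, ha0]

lemma integral_jacobiP_succ_mul_weight (n : ℕ) {α β : ℂ} (hα : -1 < α.re) (hβ : -1 < β.re)
    {x : ℝ} (hx : x ∈ Icc (-1 : ℝ) 1) :
    ∫ t in x..1, jacobiP (n + 1) α β t * (1 - (t : ℂ)) ^ α * (1 + (t : ℂ)) ^ β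
      = (2 * (n + 1 : ℂ))⁻¹ * (1 - (x : ℂ)) ^ (α + 1) * (1 + (x : ℂ)) ^ (β + 1) *
          jacobiP n (α + 1) (β + 1) x := by
  set q := iterDerivPoly (n + (α + 1)) (n + (β + 1)) 1 n
  have hα1 : 0 < (α + 1).re := by simp only [add_re, one_re]; linarith
  have hβ1 : 0 < (β + 1).re := by simp only [add_re, one_re]; linarith
  have hcongr : ∫ t in x..1, jacobiP (n + 1) α β t * (1 - (t : ℂ)) ^ α * (1 + (t : ℂ)) ^ β
      = ∫ t in x..1, rodriguesConst (n + 1) * weightedPoly α β (derivStep (α + 1) (β + 1) q) t := by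
    refine integral_congr_ae ?_
    filter_upwards [Measure.ae_ne volume 1] with t ht1 ht
    rw [uIoc_of_le hx.2] at ht
    exact jacobiP_succ_mul_weight n α β ⟨hx.1.trans_lt ht.1, lt_of_le_of_ne ht.2 ht1⟩
  have hftc := integral_weightedPoly_derivStep hα1 hβ1 q hx
  simp only [add_sub_cancel_right] at hftc
  rw [hcongr, intervalIntegral.integral_const_mul, hftc, rodriguesConst_succ, weightedPoly]
  have hα0 : α + 1 ≠ 0 := fun h => by simp only [h, zero_re, lt_self_iff_false] at hα1
  have hβ0 : β + 1 ≠ 0 := fun h => by simp only [h, zero_re, lt_self_iff_false] at hβ1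
  -- At `x = ±1` the weight kills both sides, whatever junk value `jacobiP` takes there.
  have hweight : x ∈ Ioo (-1 : ℝ) 1 ∨ (1 - (x : ℂ)) ^ (α + 1) * (1 + (x : ℂ)) ^ (β + 1) = 0 := by
    rcases eq_or_lt_of_le hx.1 with rfl | h1
    · right; simp [hβ0]
    rcases eq_or_lt_of_le hx.2 with rfl | h2
    · right; simp [hα0]
    exact Or.inl ⟨h1, h2⟩
  rcases hweight with hx' | hW
  · rw [jacobiP_eq_eval n _ _ hx']
    ring
  · linear_combination ((2 * (n + 1 : ℂ))⁻¹ * rodriguesConst n * q.eval (x : ℂ)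
      - (2 * (n + 1 : ℂ))⁻¹ * jacobiP n (α + 1) (β + 1) x) * hW

lemma ofReal_two_mul_sq_cpow_half {s : ℝ} (hs : 0 ≤ s) (d : ℝ) :
    ((2 * s ^ 2 : ℝ) : ℂ) ^ ((d : ℂ) / 2) = 2 ^ ((d : ℂ) / 2) * (s : ℂ) ^ (d : ℂ) := by
  have hsq : (s ^ 2) ^ (d / 2) = s ^ d := by
    rw [← Real.rpow_natCast, ← Real.rpow_mul hs]
    congr 1
    push_cast
    ring
  rw [show (d : ℂ) / 2 = ((d / 2 : ℝ) : ℂ) by push_cast; rfl, ← ofReal_cpow (by positivity),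
    Real.mul_rpow zero_le_two (sq_nonneg s), hsq, ofReal_mul, ofReal_cpow zero_le_two,
    ofReal_cpow hs]
  norm_num

end JacobiRodrigues

open JacobiRodrigues

theorem stmt6 (l : ℕ) (hl : 1 ≤ l) (d d₀ : ℝ) (hd : d₀ ≤ d) (hd₀ : 0 < d₀)
    (r : ℝ) (hr : r ∈ Set.Icc 0 Real.pi) :
    ∫ t in Real.cos r..1,
        jacobiP l ((d : ℂ)/2 - 1) ((d₀ : ℂ)/2 - 1) t *
          (1 - (t : ℂ)) ^ ((d : ℂ)/2 - 1) * (1 + (t : ℂ)) ^ ((d₀ : ℂ)/2 - 1)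
      = (2 : ℂ) ^ ((d : ℂ)/2 + (d₀ : ℂ)/2 - 1) * (l : ℂ)⁻¹ *
          ((Real.sin (r/2) : ℂ)) ^ (d : ℂ) * ((Real.cos (r/2) : ℂ)) ^ (d₀ : ℂ) *
          jacobiP (l - 1) ((d : ℂ)/2) ((d₀ : ℂ)/2) (Real.cos r) := by
  obtain ⟨n, rfl⟩ := Nat.exists_eq_add_of_le' hl
  have hα : -1 < ((d : ℂ) / 2 - 1).re := by simpa using hd₀.trans_le hd
  have hβ : -1 < ((d₀ : ℂ) / 2 - 1).re := by simpa using hd₀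
  have hsin : 0 ≤ Real.sin (r / 2) :=
    Real.sin_nonneg_of_nonneg_of_le_pi (by linarith [hr.1]) (by linarith [hr.2, Real.pi_pos])
  have hcos : 0 ≤ Real.cos (r / 2) :=
    Real.cos_nonneg_of_mem_Icc ⟨by linarith [hr.1, Real.pi_pos], by linarith [hr.2]⟩
  have hcos_r : Real.cos r = 2 * Real.cos (r / 2) ^ 2 - 1 := by
    rw [← Real.cos_two_mul, mul_div_cancel₀ r two_ne_zero]
  have h1 : 1 - (Real.cos r : ℂ) = ((2 * Real.sin (r / 2) ^ 2 : ℝ) : ℂ) := by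
    rw [hcos_r, Real.sin_sq]; push_cast; ring
  have h2 : 1 + (Real.cos r : ℂ) = ((2 * Real.cos (r / 2) ^ 2 : ℝ) : ℂ) := by
    rw [hcos_r]; push_cast; ring
  rw [integral_jacobiP_succ_mul_weight n hα hβ ⟨Real.neg_one_le_cos r, Real.cos_le_one r⟩,
    sub_add_cancel, sub_add_cancel, Nat.add_sub_cancel, h1, h2,
    ofReal_two_mul_sq_cpow_half hsin, ofReal_two_mul_sq_cpow_half hcos,
    Complex.cpow_sub _ _ two_ne_zero, Complex.cpow_add _ _ two_ne_zero, Complex.cpow_one]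
  push_cast
  field_simp
end

section
/- Let M be a compact distance-invariant metric measure space with probability measure μ and metric θ, and ξ a finite measure on the set of radii I. For any N-point subset D_N ⊂ M, the invariance principle λ[ξ, D_N] + θ^Δ[ξ, D_N] = ⟨θ^Δ(ξ)⟩ N² holds, where λ[ξ, D_N] = ∫_I ∫_M (#(B(y,r) ∩ D_N) - N v(r))² dμ(y) dξ(r), θ^Δ[ξ, D_N] = Σ_{x_1, x_2 ∈ D_N} θ^Δ(ξ, x_1, x_2), and ⟨θ^Δ(ξ)⟩ = ∫_{M×M} θ^Δ(ξ, y_1, y_2) dμ(y_1) dμ(y_2) = ∫_I (v(r) - v(r)²) dξ(r). -/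
open MeasureTheory Metric
open scoped symmDiff

/-!
Fix a radius `r` and write `#(B(y,r) ∩ D_N) = ∑ᵢ 1_{B(xᵢ,r)}(y)`. Expanding the square,
`∫ (∑ᵢ 1_{B(xᵢ,r)})² dμ = ∑ᵢⱼ μ(B(xᵢ,r) ∩ B(xⱼ,r))`, while
`½ μ(B(xᵢ,r) ∆ B(xⱼ,r)) = v(r) - μ(B(xᵢ,r) ∩ B(xⱼ,r))`; the intersection terms cancel and
`N² v(r) - N² v(r)²` remains. Integrating over `r` gives the identity; all integrands in `r`
are bounded combinations of monotone functions, hence `ξ`-integrable.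
-/

lemma ncard_setOf_mem_eq_sum_indicator {α ι : Type*} [Fintype ι] (s : ι → Set α) (a : α) :
    ({i | a ∈ s i}.ncard : ℝ) = ∑ i, (s i).indicator 1 a := by
  classical
  rw [Set.ncard_eq_toFinset_card', Set.toFinset_ofPred, Finset.card_filter]
  push_cast
  simp [Set.indicator_apply]

lemma sq_sum_indicator_one {α ι : Type*} [Fintype ι] (s : ι → Set α) (a : α) :
    (∑ i, (s i).indicator (1 : α → ℝ) a) ^ 2 = ∑ i, ∑ j, (s i ∩ s j).indicator 1 a := by
  simp only [sq, Finset.sum_mul_sum, Set.inter_indicator_one, Pi.mul_apply]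

section Indicators

variable {α ι : Type*} [MeasurableSpace α] {μ : Measure α} [IsFiniteMeasure μ] [Fintype ι]
  {s : ι → Set α}

lemma measureReal_symmDiff_eq_add_sub_inter {s t : Set α} (hs : MeasurableSet s)
    (ht : MeasurableSet t) :
    μ.real (s ∆ t) = μ.real s + μ.real t - 2 * μ.real (s ∩ t) := by
  have hs' := measureReal_inter_add_sdiff (μ := μ) (s := s) ht
  have ht' := measureReal_inter_add_sdiff (μ := μ) (s := t) hs
  rw [Set.inter_comm] at ht'
  rw [measureReal_symmDiff_eq hs ht]
  linarith

lemma integrable_sum_indicator_one (hs : ∀ i, MeasurableSet (s i)) :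
    Integrable (fun a => ∑ i, (s i).indicator (1 : α → ℝ) a) μ :=
  integrable_finsetSum _ fun i _ => (integrable_indicator_iff (hs i)).2 integrableOn_const

lemma integral_sum_indicator_one (hs : ∀ i, MeasurableSet (s i)) :
    ∫ a, ∑ i, (s i).indicator 1 a ∂μ = ∑ i, μ.real (s i) := by
  rw [integral_finsetSum _ fun i _ => (integrable_indicator_iff (hs i)).2 integrableOn_const]
  simp [integral_indicator_one (hs _)]

lemma integral_sq_sum_indicator_one (hs : ∀ i, MeasurableSet (s i)) :
    ∫ a, (∑ i, (s i).indicator 1 a) ^ 2 ∂μ = ∑ i, ∑ j, μ.real (s i ∩ s j) := by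
  simp_rw [sq_sum_indicator_one]
  rw [integral_finsetSum _ fun i _ => integrable_sum_indicator_one fun j => (hs i).inter (hs j)]
  simp_rw [integral_sum_indicator_one fun j => (hs _).inter (hs j)]

lemma integral_sq_sum_indicator_one_add_sum_measureReal_symmDiff
    (hs : ∀ i, MeasurableSet (s i)) :
    ∫ a, (∑ i, (s i).indicator 1 a) ^ 2 ∂μ + ∑ i, ∑ j, (1 / 2) * μ.real (s i ∆ s j)
      = Fintype.card ι * ∑ i, μ.real (s i) := by
  simp_rw [integral_sq_sum_indicator_one hs, measureReal_symmDiff_eq_add_sub_inter (hs _) (hs _),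
    mul_sub, mul_add, Finset.sum_sub_distrib, Finset.sum_add_distrib, ← Finset.mul_sum,
    Finset.sum_const, Finset.card_univ, nsmul_eq_mul, ← Finset.mul_sum]
  ring

lemma integral_sq_sum_indicator_one_sub_add_sum_measureReal_symmDiff
    [IsProbabilityMeasure μ] (hs : ∀ i, MeasurableSet (s i)) {p : ℝ}
    (hp : ∀ i, μ.real (s i) = p) :
    ∫ a, (∑ i, (s i).indicator 1 a - Fintype.card ι * p) ^ 2 ∂μ
        + ∑ i, ∑ j, (1 / 2) * μ.real (s i ∆ s j)
      = (p - p ^ 2) * Fintype.card ι ^ 2 := by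
  set c : ℝ := Fintype.card ι * p
  have hmean : ∫ a, ∑ i, (s i).indicator 1 a ∂μ = c := by
    simp [integral_sum_indicator_one hs, hp, c]
  have hS := integrable_sum_indicator_one (μ := μ) hs
  have hS2 : Integrable (fun a => (∑ i, (s i).indicator (1 : α → ℝ) a) ^ 2) μ := by
    simp_rw [sq_sum_indicator_one]
    exact integrable_finsetSum _ fun i _ =>
      integrable_sum_indicator_one fun j => (hs i).inter (hs j)
  have hsq : ∫ a, (∑ i, (s i).indicator 1 a - c) ^ 2 ∂μ
      = ∫ a, (∑ i, (s i).indicator 1 a) ^ 2 ∂μ - c ^ 2 := calc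
    _ = ∫ a, ((∑ i, (s i).indicator 1 a) ^ 2 - 2 * c * ∑ i, (s i).indicator 1 a + c ^ 2) ∂μ :=
      integral_congr_ae (ae_of_all _ fun a => by ring)
    _ = ∫ a, (∑ i, (s i).indicator 1 a) ^ 2 ∂μ - 2 * c * ∫ a, ∑ i, (s i).indicator 1 a ∂μ
          + c ^ 2 := by
      rw [integral_add (by exact hS2.sub (hS.const_mul _)) (integrable_const _),
        integral_sub hS2 (hS.const_mul _), integral_const_mul]
      simp
    _ = _ := by rw [hmean]; ring
  have := integral_sq_sum_indicator_one_add_sum_measureReal_symmDiff (μ := μ) hs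
  simp only [hp, Finset.sum_const, Finset.card_univ, nsmul_eq_mul] at this
  rw [hsq]
  linear_combination this

end Indicators

section MonotoneFamilies

variable {α β : Type*} [MeasurableSpace α] {μ : Measure α} [IsFiniteMeasure μ]
  [MeasurableSpace β] [TopologicalSpace β] [LinearOrder β] [OrderClosedTopology β]
  [BorelSpace β] {ξ : Measure β} [IsFiniteMeasure ξ]

lemma integrable_measureReal_of_monotone {s : β → Set α} (hs : Monotone s) :
    Integrable (fun r => μ.real (s r)) ξ := by
  have hmono : Monotone fun r => μ.real (s r) := fun _ _ h => measureReal_mono (hs h)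
  refine Integrable.of_bound hmono.measurable.aestronglyMeasurable (μ.real Set.univ)
    (ae_of_all _ fun r => ?_)
  rw [Real.norm_of_nonneg measureReal_nonneg]
  exact measureReal_mono (Set.subset_univ _)

lemma integrable_measureReal_symmDiff_of_monotone {s t : β → Set α} (hs : Monotone s)
    (ht : Monotone t) (hs_meas : ∀ r, MeasurableSet (s r)) (ht_meas : ∀ r, MeasurableSet (t r)) :
    Integrable (fun r => μ.real (s r ∆ t r)) ξ := by
  simp_rw [measureReal_symmDiff_eq_add_sub_inter (hs_meas _) (ht_meas _)]
  have hinter : Monotone fun r => s r ∩ t r := fun _ _ h => Set.inter_subset_inter (hs h) (ht h)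
  exact ((integrable_measureReal_of_monotone hs).add (integrable_measureReal_of_monotone ht)).sub
    ((integrable_measureReal_of_monotone hinter).const_mul _)

end MonotoneFamilies

lemma integral_add_sum_sum_integral_eq {β ι : Type*} [MeasurableSpace β] {ξ : Measure β}
    [Fintype ι] {f g : β → ℝ} {h : ι → ι → β → ℝ} (hg : Integrable g ξ)
    (hh : ∀ i j, Integrable (h i j) ξ)
    (hfgh : ∀ r, f r + ∑ i, ∑ j, h i j r = g r) :
    ∫ r, f r ∂ξ + ∑ i, ∑ j, ∫ r, h i j r ∂ξ = ∫ r, g r ∂ξ := by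
  have hf : f = fun r => g r - ∑ i, ∑ j, h i j r := funext fun r => eq_sub_of_add_eq (hfgh r)
  have hsum : ∀ i, Integrable (fun r => ∑ j, h i j r) ξ := fun i =>
    integrable_finsetSum _ fun j _ => hh i j
  rw [hf, integral_sub hg (integrable_finsetSum _ fun i _ => hsum i),
    integral_finsetSum _ fun i _ => hsum i]
  simp_rw [integral_finsetSum _ fun j _ => hh _ j]
  ring

theorem stmt15_general {M : Type*} [MetricSpace M] [MeasurableSpace M]
    [BorelSpace M] (μ : Measure M) [IsProbabilityMeasure μ]
    (ξ : Measure ℝ) [IsFiniteMeasure ξ]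
    (v : ℝ → ℝ) (hv : ∀ (y : M) (r : ℝ), (μ (ball y r)).toReal = v r)
    (N : ℕ) (x : Fin N → M) :
    (∫ r, (∫ y, ((Set.ncard {i : Fin N | x i ∈ ball y r} : ℝ) - N * v r) ^ 2 ∂μ) ∂ξ) +
      (∑ i : Fin N, ∑ j : Fin N,
        (1/2) * ∫ r, (μ (ball (x i) r ∆ ball (x j) r)).toReal ∂ξ)
      = (∫ r, (v r - (v r) ^ 2) ∂ξ) * (N : ℝ) ^ 2 := by
  obtain ⟨y₀⟩ := nonempty_of_isProbabilityMeasure μ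
  have hv_int : Integrable v ξ := by
    simpa only [measureReal_def, hv y₀] using
      integrable_measureReal_of_monotone (μ := μ) (ξ := ξ)
        fun _ _ h => ball_subset_ball h (x := y₀)
  have hv_norm_le : ∀ r, ‖v r‖ ≤ 1 := fun r => by
    rw [← hv y₀, ← measureReal_def, Real.norm_of_nonneg measureReal_nonneg]
    exact measureReal_le_one
  have hvar_int : Integrable (fun r => v r - v r ^ 2) ξ := by
    have : Integrable (fun r => v r - v r * v r) ξ :=
      hv_int.sub (hv_int.mul_bdd hv_int.aestronglyMeasurable (ae_of_all _ hv_norm_le))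
    simpa only [sq] using this
  have hsymm_int : ∀ i j, Integrable
      (fun r => 1 / 2 * (μ (ball (x i) r ∆ ball (x j) r)).toReal) ξ := fun i j =>
    (integrable_measureReal_symmDiff_of_monotone (fun _ _ h => ball_subset_ball h)
      (fun _ _ h => ball_subset_ball h) (fun _ => measurableSet_ball)
      (fun _ => measurableSet_ball)).const_mul _
  have hpointwise : ∀ r, (∫ y, ((Set.ncard {i : Fin N | x i ∈ ball y r} : ℝ) - N * v r) ^ 2 ∂μ)
      + ∑ i : Fin N, ∑ j : Fin N, 1 / 2 * (μ (ball (x i) r ∆ ball (x j) r)).toReal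
      = (v r - v r ^ 2) * N ^ 2 := fun r => by
    simp_rw [mem_ball_comm (x := x _), ncard_setOf_mem_eq_sum_indicator]
    simpa only [Fintype.card_fin, measureReal_def] using
      integral_sq_sum_indicator_one_sub_add_sum_measureReal_symmDiff (μ := μ)
        (fun i => measurableSet_ball) fun i => hv (x i) r
  simp_rw [← integral_const_mul (1 / 2 : ℝ)]
  rw [integral_add_sum_sum_integral_eq (hvar_int.mul_const _) hsymm_int hpointwise,
    integral_mul_const]

theorem stmt15 {M : Type*} [MetricSpace M] [CompactSpace M] [MeasurableSpace M]
    [BorelSpace M] (μ : Measure M) [IsProbabilityMeasure μ]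
    (ξ : Measure ℝ) [IsFiniteMeasure ξ]
    (v : ℝ → ℝ) (hv : ∀ (y : M) (r : ℝ), (μ (ball y r)).toReal = v r)
    (N : ℕ) (x : Fin N → M) :
    (∫ r, (∫ y, ((Set.ncard {i : Fin N | x i ∈ ball y r} : ℝ) - N * v r) ^ 2 ∂μ) ∂ξ) +
      (∑ i : Fin N, ∑ j : Fin N,
        (1/2) * ∫ r, (μ (ball (x i) r ∆ ball (x j) r)).toReal ∂ξ)
      = (∫ r, (v r - (v r) ^ 2) ∂ξ) * (N : ℝ) ^ 2 :=
  stmt15_general μ ξ v hv N x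
end
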